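/- Let X be a nonnegative real random variable with E[X] < ∞, let B ≥ 1 be an integer, and let s > 0. Define the unsigned model derivatives φ_u(s) = (4^{−B}/6)·s·P(X ≤ s) + 2·E[(s − X)·𝟙{X > s}] and ψ_u(s) = (4^{−B}/6)·P(X ≤ s) + 2·P(X > s). Then ψ_u(s) > 0 and the Newton–Raphson step s − φ_u(s)/ψ_u(s) equals E[X·𝟙{X > s}] / ((4^{−B}/12)·P(X ≤ s) + P(X > s)). (Unsigned analogue of Theorem 1.) -/

import Mathlib

open MeasureTheory
open scoped ProbabilityTheory

/-- Unsigned model first derivative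
`φ_u(s) = (4^{−B}/6)·s·P(X ≤ s) + 2·E[(s − X)·𝟙{X > s}]`. -/
noncomputable def phiu {Ω : Type*} [MeasureSpace Ω] (X : Ω → ℝ) (B : ℕ) (s : ℝ) : ℝ :=
  ((4 : ℝ) ^ (-(B : ℤ)) / 6) * s * (ℙ {ω | X ω ≤ s}).toReal
    + 2 * ∫ ω in {ω | s < X ω}, (s - X ω) ∂ℙ

/-- Unsigned model second derivative
`ψ_u(s) = (4^{−B}/6)·P(X ≤ s) + 2·P(X > s)`. -/
noncomputable def psiu {Ω : Type*} [MeasureSpace Ω] (X : Ω → ℝ) (B : ℕ) (s : ℝ) : ℝ :=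
  ((4 : ℝ) ^ (-(B : ℤ)) / 6) * (ℙ {ω | X ω ≤ s}).toReal + 2 * (ℙ {ω | s < X ω}).toReal

/-!
`ψ_u(s)` is a combination with positive weights of `P(X ≤ s)` and `P(X > s)`, which sum to one.
Splitting `E[(s − X)·𝟙{X > s}] = s·P(X > s) − E[X·𝟙{X > s}]` gives
`φ_u(s) = s·ψ_u(s) − 2·E[X·𝟙{X > s}]`, so the Newton step is `2·E[X·𝟙{X > s}] / ψ_u(s)`.
-/

lemma weighted_sum_pos_of_add_eq_one {a b p q : ℝ} (ha : 0 < a) (hb : 0 < b)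
    (hp : 0 ≤ p) (hq : 0 ≤ q) (hpq : p + q = 1) : 0 < a * p + b * q := by
  rcases hp.eq_or_lt with rfl | hp
  · simp_all
  · positivity

lemma newton_step_eq_div {a p q s I : ℝ} (h : a * p + 2 * q ≠ 0) :
    s - (a * s * p + 2 * (s * q - I)) / (a * p + 2 * q) = I / (a / 2 * p + q) := by
  rw [show a / 2 * p + q = (a * p + 2 * q) / 2 by ring]
  field_simp
  ring

section

variable {Ω : Type*} [MeasurableSpace Ω] {μ : Measure Ω} [IsProbabilityMeasure μ]
  {X : Ω → ℝ}

lemma probReal_le_add_probReal_lt (hX : Measurable X) (s : ℝ) :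
    μ.real {ω | X ω ≤ s} + μ.real {ω | s < X ω} = 1 := by
  have hcompl : {ω | X ω ≤ s} = {ω | s < X ω}ᶜ := by ext; simp
  rw [hcompl, add_comm]
  exact probReal_add_probReal_compl (measurableSet_lt measurable_const hX)

lemma setIntegral_const_sub (hX : Integrable X μ) (A : Set Ω) (s : ℝ) :
    ∫ ω in A, (s - X ω) ∂μ = s * μ.real A - ∫ ω in A, X ω ∂μ := by
  rw [integral_sub (integrable_const s) hX.integrableOn, setIntegral_const, smul_eq_mul, mul_comm]

end

theorem stmt_14_general {Ω : Type*} [MeasureSpace Ω] [IsProbabilityMeasure (ℙ : Measure Ω)]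
    (X : Ω → ℝ) (hX : Measurable X) (hint : Integrable X ℙ)
    (B : ℕ) (s : ℝ) :
    0 < psiu X B s ∧
    s - phiu X B s / psiu X B s =
      (∫ ω in {ω | s < X ω}, X ω ∂ℙ) /
        (((4 : ℝ) ^ (-(B : ℤ)) / 12) * (ℙ {ω | X ω ≤ s}).toReal +
          (ℙ {ω | s < X ω}).toReal) := by
  have hc : 0 < (4 : ℝ) ^ (-(B : ℤ)) / 6 := by positivity
  have hψ : 0 < psiu X B s :=
    weighted_sum_pos_of_add_eq_one hc two_pos measureReal_nonneg measureReal_nonneg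
      (probReal_le_add_probReal_lt hX s)
  refine ⟨hψ, ?_⟩
  rw [phiu, setIntegral_const_sub hint]
  simp only [psiu, ← measureReal_def] at hψ ⊢
  rw [newton_step_eq_div hψ.ne']
  ring

/-- Unsigned analogue of Theorem 1: `ψ_u(s) > 0` and the Newton–Raphson step
`s − φ_u(s)/ψ_u(s)` equals `E[X·𝟙{X > s}] / ((4^{−B}/12)·P(X ≤ s) + P(X > s))`. -/
theorem stmt_14 {Ω : Type*} [MeasureSpace Ω] [IsProbabilityMeasure (ℙ : Measure Ω)]
    (X : Ω → ℝ) (hX : Measurable X) (hnonneg : ∀ ω, 0 ≤ X ω) (hint : Integrable X ℙ)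
    (B : ℕ) (hB : 1 ≤ B) (s : ℝ) (hs : 0 < s) :
    0 < psiu X B s ∧
    s - phiu X B s / psiu X B s =
      (∫ ω in {ω | s < X ω}, X ω ∂ℙ) /
        (((4 : ℝ) ^ (-(B : ℤ)) / 12) * (ℙ {ω | X ω ≤ s}).toReal +
          (ℙ {ω | s < X ω}).toReal) :=
  stmt_14_general X hX hint B s
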